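/- arXiv:2210.13968 — 2 statements merged into one kernel-verified Lean document; each statement's English description precedes it below -/
import Mathlib

section
/- Let f : E₁ → ℝ be differentiable and α-strongly convex for some α > 0, let ρ > 0, and for q = (x,y) ∈ E and w ∈ E₂ define S(q,w) := f(x) + ⟨w, 𝒦q⟩ + (ρ/2)‖𝒦q‖². Set α_S := min{α/2, αρ/(α + 2ρ‖𝒜‖²)} > 0. Then for every fixed w ∈ E₂ the function q ↦ S(q,w) is α_S-strongly convex; in particular, for all q₁, q₂ ∈ E, S(q₂,w) − S(q₁,w) ≥ ⟨∇_q S(q₁,w), q₂ − q₁⟩ + (α_S/2)‖q₂ − q₁‖². -/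
/-! Along `q₂ - q₁ = (u, v)`, the Bregman gap `S(q₂) - S(q₁) - ⟪∇S(q₁), q₂ - q₁⟫` of `S(·, w)` is
that of `f` plus `(ρ/2)‖𝒜u - v‖²`, because `⟪w, 𝒦q⟫` is linear and `(ρ/2)‖𝒦q‖²` is quadratic in
`q`. Strong convexity of `f` therefore reduces the claim to
`α_S (‖u‖² + ‖v‖²) ≤ α‖u‖² + ρ‖𝒜u - v‖²`, which follows from `‖v‖ ≤ ‖𝒜‖‖u‖ + ‖𝒜u - v‖` and a
weighted Young inequality: `α_S ≤ α/2` pays for `‖u‖²`, and `α_S ≤ αρ/(α + 2ρ‖𝒜‖²)` is exactly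
what makes the weights balance for `‖v‖²`. -/

open scoped RealInnerProductSpace
noncomputable section

variable {E₁ E₂ : Type*}
  [NormedAddCommGroup E₁] [InnerProductSpace ℝ E₁] [FiniteDimensional ℝ E₁]
  [NormedAddCommGroup E₂] [InnerProductSpace ℝ E₂] [FiniteDimensional ℝ E₂]

/-- The constraint map `𝒦(x,y) := 𝒜x − y` on the product inner product space
`E := E₁ ×₂ E₂`, as a continuous linear map. -/
def Kmap (A : E₁ →L[ℝ] E₂) : WithLp 2 (E₁ × E₂) →L[ℝ] E₂ :=
  (A.comp (ContinuousLinearMap.fst ℝ E₁ E₂) - ContinuousLinearMap.snd ℝ E₁ E₂).comp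
    (WithLp.prodContinuousLinearEquiv 2 ℝ E₁ E₂).toContinuousLinearMap

/-- The smooth part of the augmented Lagrangian,
`S(q,w) := f(x) + ⟨w, 𝒦q⟩ + (ρ/2)‖𝒦q‖²`. -/
def SAL (f : E₁ → ℝ) (A : E₁ →L[ℝ] E₂) (ρ : ℝ) (q : WithLp 2 (E₁ × E₂)) (w : E₂) : ℝ :=
  f (WithLp.equiv 2 (E₁ × E₂) q).1 + ⟪w, Kmap A q⟫ + ρ / 2 * ‖Kmap A q‖ ^ 2

theorem mul_sq_add_le_of_mul_le {α ρ c N p t : ℝ} (hα : 0 < α) (hρ : 0 < ρ) (hc : 0 ≤ c)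
    (hcρ : c * (α + 2 * ρ * N ^ 2) ≤ α * ρ) :
    c * (N * p + t) ^ 2 ≤ α / 2 * p ^ 2 + ρ * t ^ 2 := by
  have hρc : c ≤ ρ := by nlinarith [mul_nonneg (mul_nonneg hc hρ.le) (sq_nonneg N)]
  rcases hρc.lt_or_eq with hlt | rfl
  · -- Young: `(a + b)² ≤ ρ/(ρ - c) a² + ρ/c b²`
    have hYoung : (ρ - c) * (c * (N * p + t) ^ 2) ≤ (ρ - c) * (α / 2 * p ^ 2 + ρ * t ^ 2) := by
      nlinarith [sq_nonneg ((ρ - c) * t - c * N * p), sq_nonneg p]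
    exact le_of_mul_le_mul_left hYoung (sub_pos.2 hlt)
  · have hN : N ^ 2 = 0 := by nlinarith [sq_nonneg N, mul_pos hρ hρ]
    obtain rfl : N = 0 := pow_eq_zero_iff two_ne_zero |>.1 hN
    nlinarith [sq_nonneg p]

theorem mul_sq_add_sq_le_of_le_mul_add {α ρ c N p r t : ℝ} (hα : 0 < α) (hρ : 0 < ρ)
    (hc : 0 ≤ c) (hcα : 2 * c ≤ α) (hcρ : c * (α + 2 * ρ * N ^ 2) ≤ α * ρ) (hr : 0 ≤ r)
    (hrt : r ≤ N * p + t) : c * (p ^ 2 + r ^ 2) ≤ α * p ^ 2 + ρ * t ^ 2 := by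
  nlinarith [mul_sq_add_le_of_mul_le (p := p) (t := t) hα hρ hc hcρ,
    mul_le_mul_of_nonneg_left (pow_le_pow_left₀ hr hrt 2) hc, sq_nonneg p]

theorem mul_norm_sq_add_norm_sq_le {F G : Type*} [SeminormedAddCommGroup F] [NormedSpace ℝ F]
    [SeminormedAddCommGroup G] [NormedSpace ℝ G] {α ρ c : ℝ} (hα : 0 < α) (hρ : 0 < ρ)
    (hc : 0 ≤ c) (hcα : 2 * c ≤ α) (A : F →L[ℝ] G)
    (hcρ : c * (α + 2 * ρ * ‖A‖ ^ 2) ≤ α * ρ) (u : F) (v : G) :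
    c * (‖u‖ ^ 2 + ‖v‖ ^ 2) ≤ α * ‖u‖ ^ 2 + ρ * ‖A u - v‖ ^ 2 := by
  refine mul_sq_add_sq_le_of_le_mul_add hα hρ hc hcα hcρ (norm_nonneg v) ?_
  calc ‖v‖ = ‖A u - (A u - v)‖ := by rw [sub_sub_cancel]
    _ ≤ ‖A u‖ + ‖A u - v‖ := norm_sub_le _ _
    _ ≤ ‖A‖ * ‖u‖ + ‖A u - v‖ := by gcongr; exact A.le_opNorm u

section

variable {F₁ F₂ : Type*} [NormedAddCommGroup F₁] [InnerProductSpace ℝ F₁]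
  [NormedAddCommGroup F₂] [InnerProductSpace ℝ F₂]
  {f : F₁ → ℝ} {A : F₁ →L[ℝ] F₂} {ρ : ℝ} {w : F₂}

theorem Kmap_apply (q : WithLp 2 (F₁ × F₂)) : Kmap A q = A q.fst - q.snd :=
  rfl

theorem hasFDerivAt_SAL {q : WithLp 2 (F₁ × F₂)} (hf : DifferentiableAt ℝ f q.fst) :
    HasFDerivAt (fun q => SAL f A ρ q w)
      ((fderiv ℝ f q.fst).comp (WithLp.fstL 2 ℝ F₁ F₂) +
        (innerSL ℝ (w + ρ • Kmap A q)).comp (Kmap A)) q := by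
  have hfst : HasFDerivAt (fun q : WithLp 2 (F₁ × F₂) => f q.fst)
      ((fderiv ℝ f q.fst).comp (WithLp.fstL 2 ℝ F₁ F₂)) q :=
    hf.hasFDerivAt.comp q (WithLp.fstL 2 ℝ F₁ F₂).hasFDerivAt
  refine ((hfst.add ((innerSL ℝ w).comp (Kmap A)).hasFDerivAt).add
    ((Kmap A).hasFDerivAt.norm_sq.const_mul (ρ / 2))).congr_fderiv ?_
  ext d
  simp only [add_apply, ContinuousLinearMap.comp_apply, smul_apply,
    innerSL_apply_apply, inner_add_left, real_inner_smul_left, smul_eq_mul, nsmul_eq_mul]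
  ring

theorem SAL_sub_sub_inner_gradient [CompleteSpace F₁] [CompleteSpace F₂]
    {q₁ q₂ : WithLp 2 (F₁ × F₂)} (hf : DifferentiableAt ℝ f q₁.fst) :
    SAL f A ρ q₂ w - SAL f A ρ q₁ w - ⟪gradient (fun q => SAL f A ρ q w) q₁, q₂ - q₁⟫ =
      f q₂.fst - f q₁.fst - ⟪gradient f q₁.fst, q₂.fst - q₁.fst⟫ +
        ρ / 2 * ‖A (q₂.fst - q₁.fst) - (q₂.snd - q₁.snd)‖ ^ 2 := by
  have hK : A (q₂.fst - q₁.fst) - (q₂.snd - q₁.snd) = Kmap A q₂ - Kmap A q₁ := by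
    simp only [Kmap_apply, map_sub]; abel
  rw [inner_gradient_left, inner_gradient_left, (hasFDerivAt_SAL hf).fderiv, hK, norm_sub_sq_real]
  simp only [SAL, WithLp.equiv_apply, WithLp.ofLp_fst, add_apply, ContinuousLinearMap.comp_apply,
    innerSL_apply_apply, WithLp.fstL_apply, map_sub, inner_add_left,
    real_inner_smul_left, real_inner_self_eq_norm_sq, real_inner_comm (Kmap A q₁) (Kmap A q₂)]
  ring

end

/-- if `f` is differentiable and `α`-strongly convex with `α > 0` and
`ρ > 0`, then for every fixed `w` the function `q ↦ S(q,w)` is `α_S`-strongly convex with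
`α_S := min {α/2, αρ/(α + 2ρ‖𝒜‖²)} > 0`. -/
theorem sal_strongly_convex (f : E₁ → ℝ) (α ρ : ℝ) (A : E₁ →L[ℝ] E₂)
    (hα : 0 < α) (hρ : 0 < ρ) (hdiff : Differentiable ℝ f)
    (hsc : ∀ u v : E₁, f v ≥ f u + ⟪gradient f u, v - u⟫ + α / 2 * ‖v - u‖ ^ 2) :
    0 < min (α / 2) (α * ρ / (α + 2 * ρ * ‖A‖ ^ 2)) ∧
    ∀ w : E₂, ∀ q₁ q₂ : WithLp 2 (E₁ × E₂),
      SAL f A ρ q₂ w - SAL f A ρ q₁ w ≥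
        ⟪gradient (fun q => SAL f A ρ q w) q₁, q₂ - q₁⟫ +
          min (α / 2) (α * ρ / (α + 2 * ρ * ‖A‖ ^ 2)) / 2 * ‖q₂ - q₁‖ ^ 2 := by
  set c := min (α / 2) (α * ρ / (α + 2 * ρ * ‖A‖ ^ 2))
  have hc : 0 < c := lt_min (by positivity) (by positivity)
  have hcα : 2 * c ≤ α := by linarith [min_le_left (α / 2) (α * ρ / (α + 2 * ρ * ‖A‖ ^ 2))]
  have hcρ : c * (α + 2 * ρ * ‖A‖ ^ 2) ≤ α * ρ := (le_div_iff₀ (by positivity)).1 (min_le_right _ _)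
  refine ⟨hc, fun w q₁ q₂ => ?_⟩
  have hnorm : ‖q₂ - q₁‖ ^ 2 = ‖q₂.fst - q₁.fst‖ ^ 2 + ‖q₂.snd - q₁.snd‖ ^ 2 :=
    WithLp.prod_norm_sq_eq_of_L2 _
  have hbregman := SAL_sub_sub_inner_gradient (A := A) (ρ := ρ) (w := w) (q₂ := q₂) (hdiff q₁.fst)
  have hf := hsc q₁.fst q₂.fst
  have hquad := mul_norm_sq_add_norm_sq_le hα hρ hc.le hcα A hcρ (q₂.fst - q₁.fst) (q₂.snd - q₁.snd)
  rw [hnorm]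
  linarith

end
end

section
/- Let ℱ ⊆ ℝᵈ be a compact convex polytope. There exists a constant λ ≥ 1, depending only on ℱ, such that the following holds: for every p ∈ ℝᵈ, every c > 0, every point x ∈ ℱ written as a convex combination of vertices z₁,…,z_t of ℱ, and every vertex z_{t+1} of ℱ minimizing ⟨z, p⟩ over z ∈ ℱ, if γ* is an optimal solution of the problem min over γ ∈ ℝ^{t+1}, γ ≥ 0, Σᵢγᵢ = 1 of ⟨Σᵢ γᵢ zᵢ, p⟩ + (c/2)‖Σᵢ γᵢ zᵢ − x‖², then the point v := Σᵢ γ*ᵢ zᵢ ∈ ℱ satisfies ⟨v, p⟩ + (c/2)‖v − x‖² ≤ ⟨u, p⟩ + (λc/2)‖u − x‖² for all u ∈ ℱ. -/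
/-!
A Hoffman-type bound drives the proof: for finite `I ⊆ S` there is `C` such that every
`u ∈ conv S` is a convex combination of `S` with weight at most `C ‖u - x‖` outside `I`, whatever
`x ∈ conv I`. Moving that outside weight onto the linear minimizer `ζ` gives a point
`w ∈ conv (I ∪ {ζ})` with `⟪w, p⟫ ≤ ⟪u, p⟫` and `‖w - x‖ ≤ K ‖u - x‖`, and comparing `γ*` with
the weights of `w` gives the claim with `λ = K²`.

The bound is proved by adding the points of `S \ I` one at a time: the weight that a point of
`conv (T ∪ {w})` must put on `w` is at most proportional to its distance from `conv T`, because
`conv T` is cut out by finitely many half-spaces (Minkowski–Weyl, proved by Fourier–Motzkin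
elimination of the weight of each new point).
-/

open Finset
open scoped RealInnerProductSpace

section Polytope

variable {E : Type*} [NormedAddCommGroup E] [InnerProductSpace ℝ E]

def polyhedron (L : Finset (E × ℝ)) : Set E := {z | ∀ q ∈ L, ⟪q.1, z⟫ ≤ q.2}

lemma convex_polyhedron (L : Finset (E × ℝ)) : Convex ℝ (polyhedron L) := by
  intro x hx y hy a b ha hb hab q hq
  rw [inner_add_right, real_inner_smul_right, real_inner_smul_right, ← one_mul q.2, ← hab, add_mul]
  exact add_le_add (mul_le_mul_of_nonneg_left (hx q hq) ha) (mul_le_mul_of_nonneg_left (hy q hq) hb)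

lemma polyhedron_union [DecidableEq E] (L₁ L₂ : Finset (E × ℝ)) :
    polyhedron (L₁ ∪ L₂) = polyhedron L₁ ∩ polyhedron L₂ := by
  ext z
  simp only [polyhedron, Set.mem_ofPred_eq, Set.mem_inter_iff, mem_union, or_imp, forall_and]

lemma mem_polyhedron_image_tight [DecidableEq E] {N : Finset E} {v z : E} :
    z ∈ polyhedron (N.image fun k => (k, ⟪k, v⟫)) ↔ ∀ k ∈ N, ⟪k, z - v⟫ ≤ 0 := by
  simp [polyhedron, inner_sub_right]

lemma exists_mem_Icc_forall_le_mul {ι : Type*} (L : Finset ι) (α β : ι → ℝ)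
    (hle : ∀ i ∈ L, 0 ≤ α i → β i ≤ α i) (hneg : ∀ i ∈ L, α i < 0 → β i ≤ 0)
    (hpair : ∀ i ∈ L, ∀ j ∈ L, 0 < α i → α j < 0 → α i * β j ≤ α j * β i) :
    ∃ s ∈ Set.Icc (0 : ℝ) 1, ∀ i ∈ L, β i ≤ s * α i := by
  classical
  set R := insert 0 ((L.filter (0 < α ·)).image fun i => β i / α i)
  have hR : R.Nonempty := insert_nonempty _ _
  have hlow : ∀ i ∈ L, 0 < α i → β i ≤ R.max' hR * α i := fun i hi hα =>
    (div_le_iff₀ hα).1 <| R.le_max' _ <| mem_insert_of_mem <| mem_image_of_mem _ <|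
      mem_filter.2 ⟨hi, hα⟩
  refine ⟨R.max' hR, ⟨R.le_max' 0 (mem_insert_self _ _), R.max'_le hR _ ?_⟩, fun i hi => ?_⟩
  · simp only [R, mem_insert, mem_image, mem_filter]
    rintro _ (rfl | ⟨j, ⟨hj, hα⟩, rfl⟩)
    exacts [zero_le_one, (div_le_one hα).2 (hle j hj hα.le)]
  rcases lt_trichotomy (α i) 0 with hα | hα | hα
  · obtain hs | ⟨j, hj, hs⟩ : R.max' hR = 0 ∨ ∃ j ∈ L.filter (0 < α ·), β j / α j = R.max' hR := by
      simpa [R] using R.max'_mem hR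
    · simpa [hs] using hneg i hi hα
    · rw [mem_filter] at hj
      rw [← hs, div_mul_eq_mul_div, le_div_iff₀ hj.2]
      nlinarith [hpair j hj.1 i hi hj.2 hα]
  · simpa [hα] using hle i hi hα.ge
  · exact hlow i hi hα

lemma eq_zero_of_forall_inner_nonpos {L : Finset (E × ℝ)} (hb : Bornology.IsBounded (polyhedron L))
    (hne : (polyhedron L).Nonempty) {d : E} (hd : ∀ q ∈ L, ⟪q.1, d⟫ ≤ 0) : d = 0 := by
  obtain ⟨y, hy⟩ := hne
  obtain ⟨R, hR⟩ := hb.exists_norm_le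
  have hray : ∀ t : ℝ, 0 ≤ t → y + t • d ∈ polyhedron L := fun t ht q hq => by
    rw [inner_add_right, real_inner_smul_right]
    nlinarith [hy q hq, hd q hq]
  by_contra hd0
  have hpos : 0 < ‖d‖ := norm_pos_iff.2 hd0
  set t := (R + ‖y‖ + 1) / ‖d‖
  have ht : 0 ≤ t := div_nonneg (by linarith [norm_nonneg y, hR y hy]) hpos.le
  have hnorm : ‖t • d‖ = R + ‖y‖ + 1 := by
    rw [norm_smul, Real.norm_of_nonneg ht, div_mul_cancel₀ _ hpos.ne']
  have := norm_sub_le (y + t • d) y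
  rw [add_sub_cancel_left, hnorm] at this
  linarith [hR _ (hray t ht)]

lemma exists_polyhedron_eq_singleton [FiniteDimensional ℝ E] (v : E) :
    ∃ L : Finset (E × ℝ), polyhedron L = {v} := by
  classical
  let b := Module.finBasis ℝ E
  refine ⟨(univ.image b ∪ univ.image fun i => -b i).image fun k => (k, ⟪k, v⟫), ?_⟩
  ext z
  simp only [mem_polyhedron_image_tight, mem_union, mem_image, mem_univ, true_and,
    Set.mem_singleton_iff]
  constructor
  · intro h
    rw [← sub_eq_zero]
    refine InnerProductSpace.ext_inner_left_basis b fun i => ?_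
    have h₁ := h (b i) (Or.inl ⟨i, rfl⟩)
    have h₂ := h (-b i) (Or.inr ⟨i, rfl⟩)
    rw [inner_neg_left] at h₂
    rw [inner_zero_right]
    linarith
  · rintro rfl k -
    simp

def slack (v : E) (q : E × ℝ) : ℝ := q.2 - ⟪q.1, v⟫

/- For a bounded nonempty `P = polyhedron L`, `z ∈ conv ({v} ∪ P)` iff `⟪n, z - v⟫ ≤ s * slack v (n, b)` for all `(n, b) ∈ L` and some
`s ∈ [0, 1]`. Eliminating `s` leaves the inequalities of `L` that hold at `v`, those violated at
`v` translated to pass through `v`, and one combination for each pair of the two kinds. -/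
open Classical in
noncomputable def convexJoinIneqs (v : E) (L : Finset (E × ℝ)) : Finset (E × ℝ) :=
  L.filter (0 ≤ slack v ·) ∪
    ((L.filter (slack v · < 0)).image Prod.fst ∪
      (L ×ˢ L |>.filter fun nm => 0 ≤ slack v nm.1 ∧ slack v nm.2 < 0).image
        fun nm => (-slack v nm.2) • nm.1.1 + slack v nm.1 • nm.2.1).image
    fun k => (k, ⟪k, v⟫)

lemma mem_polyhedron_convexJoinIneqs {v z : E} {L : Finset (E × ℝ)} :
    z ∈ polyhedron (convexJoinIneqs v L) ↔
      (∀ q ∈ L, 0 ≤ slack v q → ⟪q.1, z⟫ ≤ q.2) ∧ (∀ q ∈ L, slack v q < 0 → ⟪q.1, z - v⟫ ≤ 0) ∧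
        ∀ n ∈ L, ∀ m ∈ L, 0 ≤ slack v n → slack v m < 0 →
          slack v n * ⟪m.1, z - v⟫ ≤ slack v m * ⟪n.1, z - v⟫ := by
  classical
  simp only [convexJoinIneqs, polyhedron_union, Set.mem_inter_iff, mem_polyhedron_image_tight]
  constructor
  · rintro ⟨hle, htight⟩
    refine ⟨fun q hq hs => hle q (mem_filter.2 ⟨hq, hs⟩),
      fun q hq hs => htight _ (mem_union_left _ (mem_image_of_mem _ (mem_filter.2 ⟨hq, hs⟩))),
      fun n hn m hm hsn hsm => ?_⟩
    have hnm : (n, m) ∈ (L ×ˢ L).filter fun nm => 0 ≤ slack v nm.1 ∧ slack v nm.2 < 0 :=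
      mem_filter.2 ⟨mem_product.2 ⟨hn, hm⟩, hsn, hsm⟩
    have := htight _ (mem_union_right _ (mem_image_of_mem _ hnm))
    rw [inner_add_left, real_inner_smul_left, real_inner_smul_left] at this
    linarith
  · rintro ⟨hle, hgt, hpair⟩
    refine ⟨fun q hq => hle q (mem_filter.1 hq).1 (mem_filter.1 hq).2, fun k hk => ?_⟩
    simp only [mem_union, mem_image, mem_filter, mem_product] at hk
    rcases hk with ⟨q, ⟨hq, hs⟩, rfl⟩ | ⟨⟨n, m⟩, ⟨⟨hn, hm⟩, hsn, hsm⟩, rfl⟩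
    · exact hgt q hq hs
    · rw [inner_add_left, real_inner_smul_left, real_inner_smul_left]
      linarith [hpair n hn m hm hsn hsm]

lemma mem_convexHull_insert_of_forall_le_mul {T : Set E} {L : Finset (E × ℝ)}
    (hL : convexHull ℝ T = polyhedron L) (hb : Bornology.IsBounded T) (hne : T.Nonempty)
    {v z : E} {s : ℝ} (hs : s ∈ Set.Icc (0 : ℝ) 1)
    (hz : ∀ q ∈ L, ⟪q.1, z - v⟫ ≤ s * slack v q) : z ∈ convexHull ℝ (insert v T) := by
  rcases hs.1.eq_or_lt with rfl | hs₀
  · have hzv : z - v = 0 :=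
      eq_zero_of_forall_inner_nonpos (hL ▸ isBounded_convexHull.2 hb) (hL ▸ hne.convexHull)
        fun q hq => by simpa using hz q hq
    rw [sub_eq_zero.1 hzv]
    exact subset_convexHull ℝ _ (Set.mem_insert v T)
  · set y := v + s⁻¹ • (z - v)
    have hy : y ∈ convexHull ℝ T := by
      rw [hL]
      intro q hq
      have := (inv_mul_le_iff₀ hs₀).2 (hz q hq)
      rw [slack] at this
      rw [inner_add_right, real_inner_smul_right]
      linarith
    have hzy : z = (1 - s) • v + s • y := by
      simp only [y, smul_add, smul_inv_smul₀ hs₀.ne']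
      module
    rw [hzy]
    exact convex_convexHull ℝ _ (subset_convexHull ℝ _ (Set.mem_insert v T))
      (convexHull_mono (Set.subset_insert v T) hy) (by linarith [hs.2]) hs₀.le (by ring)

theorem convexHull_insert_eq_polyhedron_convexJoinIneqs {T : Set E} {L : Finset (E × ℝ)}
    (hL : convexHull ℝ T = polyhedron L) (hb : Bornology.IsBounded T) (hne : T.Nonempty)
    (v : E) : convexHull ℝ (insert v T) = polyhedron (convexJoinIneqs v L) := by
  refine subset_antisymm (convexHull_min (Set.insert_subset_iff.2 ⟨?_, fun w hw => ?_⟩)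
    (convex_polyhedron _)) fun z hz => ?_
  · refine mem_polyhedron_convexJoinIneqs.2 ⟨fun q _ hq => ?_, fun _ _ _ => by simp,
      fun _ _ _ _ _ _ => by simp⟩
    rw [slack] at hq
    linarith
  · have hwL : w ∈ polyhedron L := hL ▸ subset_convexHull ℝ T hw
    have hwv : ∀ q ∈ L, ⟪q.1, w - v⟫ ≤ slack v q := fun q hq => by
      rw [inner_sub_right, slack]
      linarith [hwL q hq]
    refine mem_polyhedron_convexJoinIneqs.2 ⟨fun q hq _ => hwL q hq,
      fun q hq hq' => (hwv q hq).trans hq'.le, fun n hn m hm _ _ => ?_⟩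
    nlinarith [hwv n hn, hwv m hm]
  · obtain ⟨hle, hgt, hpair⟩ := mem_polyhedron_convexJoinIneqs.1 hz
    obtain ⟨s, hs, hzs⟩ := exists_mem_Icc_forall_le_mul L (slack v) (fun q => ⟪q.1, z - v⟫)
      (fun q hq hq' => by
        rw [inner_sub_right, slack]
        linarith [hle q hq hq'])
      hgt fun n hn m hm hn' hm' => hpair n hn m hm hn'.le hm'
    exact mem_convexHull_insert_of_forall_le_mul hL hb hne hs hzs

theorem Finset.exists_polyhedron_eq_convexHull [FiniteDimensional ℝ E] (T : Finset E)
    (hT : T.Nonempty) : ∃ L : Finset (E × ℝ), convexHull ℝ (T : Set E) = polyhedron L := by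
  induction hT using Finset.Nonempty.cons_induction with
  | singleton v =>
    obtain ⟨L, hL⟩ := exists_polyhedron_eq_singleton v
    exact ⟨L, by simp [hL]⟩
  | cons v T _ hT ih =>
    obtain ⟨L, hL⟩ := ih
    rw [coe_cons]
    exact ⟨_, convexHull_insert_eq_polyhedron_convexJoinIneqs hL T.finite_toSet.isBounded
      (coe_nonempty.2 hT) v⟩

lemma exists_mem_polyhedron_of_forall_le_mul {L : Finset (E × ℝ)} {w y q₀ : E} {a a₀ b₀ : ℝ}
    (hq₀ : q₀ ∈ polyhedron L) (hb₀ : 0 ≤ b₀) (hab₀ : a₀ + b₀ = 1) (hy : y = a₀ • w + b₀ • q₀)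
    (haa₀ : a ≤ a₀)
    (hviol : ∀ q ∈ L, q.2 < ⟪q.1, w⟫ → ⟪q.1, y⟫ - q.2 ≤ a * (⟪q.1, w⟫ - q.2)) :
    ∃ q ∈ polyhedron L, y = a • w + (1 - a) • q := by
  rcases haa₀.lt_or_eq with hlt | rfl
  · have h1a : 0 < 1 - a := by linarith
    refine ⟨(1 - a)⁻¹ • (y - a • w), fun q hq => ?_, by rw [smul_inv_smul₀ h1a.ne']; abel⟩
    have hyq : ⟪q.1, y⟫ = a₀ * ⟪q.1, w⟫ + b₀ * ⟪q.1, q₀⟫ := by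
      rw [hy, inner_add_right, real_inner_smul_right, real_inner_smul_right]
    rw [real_inner_smul_right, inv_mul_le_iff₀ h1a, inner_sub_right, real_inner_smul_right]
    by_cases hw : q.2 < ⟪q.1, w⟫
    · linarith [hviol q hq hw]
    · have h₁ := mul_le_mul_of_nonneg_left (not_lt.1 hw) (sub_nonneg.2 haa₀)
      have h₂ := mul_le_mul_of_nonneg_left (hq₀ q hq) hb₀
      have h₃ : (a₀ + b₀) * q.2 = q.2 := by rw [hab₀, one_mul]
      linarith
  · exact ⟨q₀, hq₀, by rw [hy, ← hab₀, add_sub_cancel_left]⟩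

theorem exists_weight_le_mul_dist (L : Finset (E × ℝ)) (w : E) :
    ∃ C, 0 ≤ C ∧ ∀ y ∈ convexJoin ℝ {w} (polyhedron L), ∃ a ∈ Set.Icc (0 : ℝ) 1,
      ∃ q ∈ polyhedron L, y = a • w + (1 - a) • q ∧ ∀ x ∈ polyhedron L, a ≤ C * ‖y - x‖ := by
  classical
  let gap : E × ℝ → ℝ := fun q => ⟪q.1, w⟫ - q.2
  let Lw := L.filter (0 < gap ·)
  let Cs := insert 0 (Lw.image fun q => ‖q.1‖ / gap q)
  have hC : 0 ≤ Cs.max' (insert_nonempty _ _) := Cs.le_max' 0 (mem_insert_self _ _)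
  refine ⟨_, hC, fun y hy => ?_⟩
  obtain ⟨w', hw', q₀, hq₀, a₀, b₀, ha₀, hb₀, hab₀, hy⟩ := mem_convexJoin.1 hy
  rw [Set.mem_singleton_iff.1 hw'] at hy
  -- the least weight on `w` that the inequalities violated by `w` allow
  let As := insert 0 (Lw.image fun q => (⟪q.1, y⟫ - q.2) / gap q)
  set a := As.max' (insert_nonempty _ _)
  have ha : 0 ≤ a := As.le_max' 0 (mem_insert_self _ _)
  have haa₀ : a ≤ a₀ := by
    refine As.max'_le _ _ fun r hr => ?_
    simp only [As, Lw, mem_insert, mem_image, mem_filter] at hr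
    obtain rfl | ⟨q, ⟨hq, hgap⟩, rfl⟩ := hr
    · exact ha₀
    · rw [div_le_iff₀ hgap, ← hy, inner_add_right, real_inner_smul_right, real_inner_smul_right]
      have h₁ := mul_le_mul_of_nonneg_left (hq₀ q hq) hb₀
      have h₂ : (a₀ + b₀) * q.2 = q.2 := by rw [hab₀, one_mul]
      linarith
  obtain ⟨q, hq, hyq⟩ := exists_mem_polyhedron_of_forall_le_mul hq₀ hb₀ hab₀ hy.symm haa₀
    fun q hq hw => (div_le_iff₀ (sub_pos.2 hw)).1 <| As.le_max' _ <| mem_insert_of_mem <|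
      mem_image_of_mem _ <| mem_filter.2 ⟨hq, sub_pos.2 hw⟩
  refine ⟨a, ⟨ha, by linarith⟩, q, hq, hyq, fun x hx => ?_⟩
  obtain ha0 | ⟨n, hn, hna⟩ : a = 0 ∨ ∃ n ∈ Lw, (⟪n.1, y⟫ - n.2) / gap n = a := by
    simpa [As] using As.max'_mem (insert_nonempty _ _)
  · rw [ha0]
    exact mul_nonneg hC (norm_nonneg _)
  have hgap := (mem_filter.1 hn).2
  calc a = (⟪n.1, y⟫ - n.2) / gap n := hna.symm
    _ ≤ ‖n.1‖ / gap n * ‖y - x‖ := by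
      rw [div_mul_eq_mul_div, div_le_div_iff_of_pos_right hgap]
      have := real_inner_le_norm n.1 (y - x)
      rw [inner_sub_right] at this
      linarith [hx n (mem_filter.1 hn).1]
    _ ≤ _ := mul_le_mul_of_nonneg_right
      (Cs.le_max' _ (mem_insert_of_mem (mem_image_of_mem _ hn))) (norm_nonneg _)

structure IsConvexWeights (S : Finset E) (μ : E → ℝ) (y : E) : Prop where
  nonneg : ∀ v ∈ S, 0 ≤ μ v
  sum_eq_one : ∑ v ∈ S, μ v = 1
  sum_smul_eq : ∑ v ∈ S, μ v • v = y

lemma Finset.exists_isConvexWeights {S : Finset E} {y : E} (hy : y ∈ convexHull ℝ (S : Set E)) :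
    ∃ μ, IsConvexWeights S μ y := by
  obtain ⟨μ, h₀, h₁, h₂⟩ := Finset.mem_convexHull'.1 hy
  exact ⟨μ, ⟨h₀, h₁, h₂⟩⟩

lemma IsConvexWeights.insert [DecidableEq E] {T : Finset E} {w q : E} {μ : E → ℝ} (hw : w ∉ T)
    (hμ : IsConvexWeights T μ q) {a : ℝ} (ha : a ∈ Set.Icc (0 : ℝ) 1) :
    IsConvexWeights (insert w T) (fun v => if v = w then a else (1 - a) * μ v)
      (a • w + (1 - a) • q) := by
  have hT : ∀ v ∈ T, (if v = w then a else (1 - a) * μ v) = (1 - a) * μ v := fun v hv =>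
    if_neg fun h : v = w => hw (h ▸ hv)
  refine ⟨fun v hv => ?_, ?_, ?_⟩
  · obtain rfl | hv := mem_insert.1 hv
    · simpa using ha.1
    · rw [hT v hv]
      exact mul_nonneg (by linarith [ha.2]) (hμ.nonneg v hv)
  · rw [sum_insert hw, if_pos rfl, sum_congr rfl hT, ← mul_sum, hμ.sum_eq_one]
    ring
  · rw [sum_insert hw, if_pos rfl, sum_congr rfl fun v hv => by rw [hT v hv], ← hμ.sum_smul_eq,
      smul_sum]
    simp only [smul_smul]

lemma weight_add_one_sub_mul_le {w q x : E} {a m C Cw D : ℝ} (ha : a ∈ Set.Icc (0 : ℝ) 1)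
    (hC : 0 ≤ C) (hD : ‖w - x‖ ≤ D) (hax : a ≤ Cw * ‖a • w + (1 - a) • q - x‖)
    (hm : m ≤ C * ‖q - x‖) :
    a + (1 - a) * m ≤ (Cw + C * (1 + Cw * D)) * ‖a • w + (1 - a) • q - x‖ := by
  have hqx : (1 - a) * ‖q - x‖ ≤ ‖a • w + (1 - a) • q - x‖ + a * D := by
    calc (1 - a) * ‖q - x‖ = ‖(a • w + (1 - a) • q - x) - a • (w - x)‖ := by
          rw [← norm_smul_of_nonneg (by linarith [ha.2])]
          congr 1
          module
      _ ≤ ‖a • w + (1 - a) • q - x‖ + a * ‖w - x‖ := by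
          rw [← norm_smul_of_nonneg ha.1]
          exact norm_sub_le _ _
      _ ≤ ‖a • w + (1 - a) • q - x‖ + a * D := by gcongr; exact ha.1
  have hmx := mul_le_mul_of_nonneg_left hm (by linarith [ha.2] : 0 ≤ 1 - a)
  have haD := mul_le_mul_of_nonneg_right hax ((norm_nonneg _).trans hD)
  nlinarith [mul_le_mul_of_nonneg_left hqx hC, mul_le_mul_of_nonneg_left haD hC]

theorem exists_isConvexWeights_sum_sdiff_le [FiniteDimensional ℝ E] [DecidableEq E]
    (I W : Finset E) :
    ∃ C, 0 ≤ C ∧ ∀ y ∈ convexHull ℝ (↑(I ∪ W) : Set E), ∀ x ∈ convexHull ℝ (I : Set E),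
      ∃ μ, IsConvexWeights (I ∪ W) μ y ∧ ∑ v ∈ (I ∪ W) \ I, μ v ≤ C * ‖y - x‖ := by
  rcases I.eq_empty_or_nonempty with rfl | hI
  · exact ⟨0, le_rfl, fun y _ x hx => by simp at hx⟩
  induction W using Finset.induction_on with
  | empty =>
    refine ⟨0, le_rfl, fun y hy x _ => ?_⟩
    obtain ⟨μ, hμ⟩ := Finset.exists_isConvexWeights hy
    exact ⟨μ, hμ, by simp⟩
  | insert w W _ ih =>
    obtain ⟨C, hC, hCW⟩ := ih
    rw [union_insert]
    by_cases hw : w ∈ I ∪ W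
    · rw [insert_eq_of_mem hw]
      exact ⟨C, hC, hCW⟩
    set T := I ∪ W
    have hTne : T.Nonempty := hI.mono subset_union_left
    obtain ⟨L, hL⟩ := T.exists_polyhedron_eq_convexHull hTne
    obtain ⟨Cw, hCw, hCwL⟩ := exists_weight_le_mul_dist L w
    obtain ⟨R, hR, hRT⟩ :=
      (isBounded_convexHull.2 T.finite_toSet.isBounded).exists_pos_norm_le
    refine ⟨Cw + C * (1 + Cw * (‖w‖ + R)), by positivity, fun y hy x hx => ?_⟩
    rw [coe_insert, convexHull_insert (coe_nonempty.2 hTne), hL] at hy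
    have hxT : x ∈ convexHull ℝ (T : Set E) := convexHull_mono (coe_subset.2 subset_union_left) hx
    obtain ⟨a, ha, q, hq, rfl, hay⟩ := hCwL y hy
    obtain ⟨μ, hμ, hμI⟩ := hCW q (hL ▸ hq) x hx
    refine ⟨_, hμ.insert hw ha, ?_⟩
    have hwI : w ∉ I := fun h => hw (mem_union_left W h)
    have hsum : ∑ v ∈ insert w T \ I, (if v = w then a else (1 - a) * μ v) =
        a + (1 - a) * ∑ v ∈ T \ I, μ v := by
      rw [insert_sdiff_of_notMem _ hwI, sum_insert fun h => hw (mem_sdiff.1 h).1, if_pos rfl,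
        mul_sum]
      exact congrArg _ <| sum_congr rfl fun v hv =>
        if_neg fun h : v = w => hw (h ▸ (mem_sdiff.1 hv).1)
    rw [hsum]
    exact weight_add_one_sub_mul_le ha hC ((norm_sub_le w x).trans (add_le_add le_rfl (hRT x hxT)))
      (hay x (hL ▸ hxT)) hμI

theorem exists_forall_subset_isConvexWeights_sum_sdiff_le [FiniteDimensional ℝ E]
    [DecidableEq E] (S : Finset E) :
    ∃ C, 0 ≤ C ∧ ∀ I ⊆ S, ∀ y ∈ convexHull ℝ (S : Set E), ∀ x ∈ convexHull ℝ (I : Set E),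
      ∃ μ, IsConvexWeights S μ y ∧ ∑ v ∈ S \ I, μ v ≤ C * ‖y - x‖ := by
  choose C hC₀ hC using fun I : Finset E => exists_isConvexWeights_sum_sdiff_le I (S \ I)
  obtain ⟨M, hM⟩ := Finset.exists_le (S.powerset.image C)
  have hCM : ∀ I ⊆ S, C I ≤ M := fun I hI => hM _ (mem_image_of_mem _ (mem_powerset.2 hI))
  refine ⟨M, (hC₀ ∅).trans (hCM ∅ (empty_subset S)), fun I hI y hy x hx => ?_⟩
  have hCI := hC I
  rw [union_sdiff_of_subset hI] at hCI
  obtain ⟨μ, hμ, hμI⟩ := hCI y hy x hx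
  exact ⟨μ, hμ, hμI.trans (mul_le_mul_of_nonneg_right (hCM I hI) (norm_nonneg _))⟩

lemma exists_weights_of_mem_convexHull_range {ι : Type*} [Fintype ι] {z : ι → E} {x : E}
    (hx : x ∈ convexHull ℝ (Set.range z)) :
    ∃ γ : ι → ℝ, (∀ i, 0 ≤ γ i) ∧ ∑ i, γ i = 1 ∧ ∑ i, γ i • z i = x := by
  classical
  suffices convexHull ℝ (Set.range z) ⊆
      {y | ∃ γ : ι → ℝ, (∀ i, 0 ≤ γ i) ∧ ∑ i, γ i = 1 ∧ ∑ i, γ i • z i = y} from this hx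
  refine convexHull_min ?_ ?_
  · rintro _ ⟨i, rfl⟩
    exact ⟨Pi.single i 1, fun j => by by_cases h : j = i <;> simp [h], by simp,
      by simp [Pi.single_apply]⟩
  · rintro _ ⟨γ₁, h₁, s₁, rfl⟩ _ ⟨γ₂, h₂, s₂, rfl⟩ a b ha hb hab
    refine ⟨a • γ₁ + b • γ₂, fun i => ?_, ?_, ?_⟩
    · simp only [Pi.add_apply, Pi.smul_apply, smul_eq_mul]
      nlinarith [h₁ i, h₂ i]
    · simp [sum_add_distrib, ← mul_sum, s₁, s₂, hab]
    · simp [add_smul, sum_add_distrib, smul_sum, smul_smul]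

theorem exists_mem_convexHull_insert_inner_le_norm_sub_le [FiniteDimensional ℝ E]
    (S : Finset E) :
    ∃ K, 1 ≤ K ∧ ∀ I ⊆ S, ∀ x ∈ convexHull ℝ (I : Set E), ∀ ζ ∈ convexHull ℝ (S : Set E),
      ∀ p : E, (∀ v ∈ S, ⟪ζ, p⟫ ≤ ⟪v, p⟫) → ∀ u ∈ convexHull ℝ (S : Set E),
        ∃ w ∈ convexHull ℝ (insert ζ (I : Set E)), ⟪w, p⟫ ≤ ⟪u, p⟫ ∧ ‖w - x‖ ≤ K * ‖u - x‖ := by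
  classical
  obtain ⟨C, hC, hCS⟩ := exists_forall_subset_isConvexWeights_sum_sdiff_le S
  obtain ⟨R, hR, hRS⟩ := (isBounded_convexHull.2 S.finite_toSet.isBounded).exists_pos_norm_le
  refine ⟨1 + 2 * R * C, by nlinarith, fun I hI x hx ζ hζ p hp u hu => ?_⟩
  obtain ⟨μ, hμ, hμI⟩ := hCS I hI u hu x hx
  let r : E → E := fun v => if v ∈ I then v else ζ
  have hwu : ∑ v ∈ S, μ v • r v - u = ∑ v ∈ S \ I, μ v • (ζ - v) := by
    rw [← hμ.sum_smul_eq, ← sum_sub_distrib, ← sum_sdiff hI,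
      sum_eq_zero (s := I) fun v hv => by simp [r, hv], add_zero]
    exact sum_congr rfl fun v hv => by simp [r, (mem_sdiff.1 hv).2, smul_sub]
  have hwu_le : ‖∑ v ∈ S, μ v • r v - u‖ ≤ 2 * R * (C * ‖u - x‖) := by
    rw [hwu]
    calc _ ≤ ∑ v ∈ S \ I, ‖μ v • (ζ - v)‖ := norm_sum_le _ _
      _ ≤ ∑ v ∈ S \ I, μ v * (2 * R) := sum_le_sum fun v hv => by
        have hμv := hμ.nonneg v (mem_sdiff.1 hv).1
        rw [norm_smul, Real.norm_of_nonneg hμv]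
        refine mul_le_mul_of_nonneg_left ((norm_sub_le _ _).trans ?_) hμv
        linarith [hRS ζ hζ, hRS v (subset_convexHull ℝ _ (mem_sdiff.1 hv).1)]
      _ ≤ 2 * R * (C * ‖u - x‖) := by
        rw [← sum_mul, mul_comm]
        exact mul_le_mul_of_nonneg_left hμI (by positivity)
  refine ⟨∑ v ∈ S, μ v • r v, ?_, ?_, ?_⟩
  · refine (convex_convexHull ℝ _).sum_mem hμ.nonneg hμ.sum_eq_one fun v _ =>
      subset_convexHull ℝ _ ?_
    by_cases hv : v ∈ I <;> simp [r, hv]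
  · rw [← hμ.sum_smul_eq, sum_inner, sum_inner]
    refine sum_le_sum fun v hv => ?_
    rw [real_inner_smul_left, real_inner_smul_left]
    refine mul_le_mul_of_nonneg_left ?_ (hμ.nonneg v hv)
    by_cases hvI : v ∈ I <;> simp [r, hvI, hp v hv]
  · calc _ ≤ ‖∑ v ∈ S, μ v • r v - u‖ + ‖u - x‖ := norm_sub_le_norm_sub_add_norm_sub _ _ _
      _ ≤ _ := by nlinarith

end Polytope

theorem polytope_wpo_general (d : ℕ) (F : Set (EuclideanSpace ℝ (Fin d)))
    (hpoly : ∃ s : Finset (EuclideanSpace ℝ (Fin d)), F = convexHull ℝ (s : Set (EuclideanSpace ℝ (Fin d)))) :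
    ∃ lam : ℝ, 1 ≤ lam ∧
      ∀ (p : EuclideanSpace ℝ (Fin d)) (c : ℝ), 0 < c →
      ∀ (t : ℕ) (z : Fin (t + 1) → EuclideanSpace ℝ (Fin d)) (x : EuclideanSpace ℝ (Fin d)),
        -- `z₁,…,z_t` are vertices of `ℱ` and `x` is a convex combination of them
        (∀ i : Fin t, z i.castSucc ∈ Set.extremePoints ℝ F) →
        (∃ μ : Fin t → ℝ, (∀ i, 0 ≤ μ i) ∧ ∑ i, μ i = 1 ∧
          x = ∑ i : Fin t, μ i • z i.castSucc) →
        -- `z_{t+1}` is a vertex of `ℱ` minimizing `⟨·, p⟩` over `ℱ`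
        z (Fin.last t) ∈ Set.extremePoints ℝ F →
        (∀ u ∈ F, ⟪z (Fin.last t), p⟫ ≤ ⟪u, p⟫) →
        -- `γ*` is optimal for the quadratic problem over the simplex
        ∀ γs : Fin (t + 1) → ℝ, (∀ i, 0 ≤ γs i) → ∑ i, γs i = 1 →
          (∀ γ : Fin (t + 1) → ℝ, (∀ i, 0 ≤ γ i) → ∑ i, γ i = 1 →
            ⟪∑ i, γs i • z i, p⟫ + c / 2 * ‖(∑ i, γs i • z i) - x‖ ^ 2 ≤
              ⟪∑ i, γ i • z i, p⟫ + c / 2 * ‖(∑ i, γ i • z i) - x‖ ^ 2) →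
          ∀ u ∈ F,
            ⟪∑ i, γs i • z i, p⟫ + c / 2 * ‖(∑ i, γs i • z i) - x‖ ^ 2 ≤
              ⟪u, p⟫ + lam * c / 2 * ‖u - x‖ ^ 2 := by
  classical
  obtain ⟨S, rfl⟩ := hpoly
  obtain ⟨K, hK, hKS⟩ := exists_mem_convexHull_insert_inner_le_norm_sub_le S
  refine ⟨K ^ 2, one_le_pow₀ hK, fun p c hc t z x hz ⟨μ, hμ₀, hμ₁, hx⟩ hζ hζp _ _ _ hopt u hu => ?_⟩
  let I := univ.image fun i : Fin t => z i.castSucc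
  have hIS : I ⊆ S := by
    simpa [I, image_subset_iff] using fun i => extremePoints_convexHull_subset (hz i)
  have hxI : x ∈ convexHull ℝ (I : Set _) := hx ▸ (convex_convexHull ℝ _).sum_mem
    (fun i _ => hμ₀ i) hμ₁ fun i _ => subset_convexHull ℝ _ (by simp [I])
  obtain ⟨w, hw, hwp, hwx⟩ := hKS I hIS x hxI _ (extremePoints_subset hζ) p
    (fun v hv => hζp v (subset_convexHull ℝ _ hv)) u hu
  have hIz : insert (z (Fin.last t)) (I : Set _) ⊆ Set.range z := by
    rintro _ (rfl | hv)
    · exact ⟨_, rfl⟩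
    · obtain ⟨i, -, rfl⟩ := mem_image.1 hv
      exact ⟨_, rfl⟩
  obtain ⟨γ, hγ₀, hγ₁, rfl⟩ := exists_weights_of_mem_convexHull_range (convexHull_mono hIz hw)
  have hsq : ‖∑ i, γ i • z i - x‖ ^ 2 ≤ K ^ 2 * ‖u - x‖ ^ 2 := by
    rw [← mul_pow]
    exact pow_le_pow_left₀ (norm_nonneg _) hwx 2
  calc _ ≤ _ := hopt γ hγ₀ hγ₁
    _ ≤ _ := by nlinarith [mul_le_mul_of_nonneg_left hsq (by positivity : 0 ≤ c / 2)]

/-- the weak proximal oracle for a compact convex polytope `ℱ ⊆ ℝᵈ`.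
There is a constant `λ ≥ 1`, depending only on `ℱ`, with the following property: for every
`p`, `c > 0`, every `x ∈ ℱ` given as a convex combination of vertices `z₁,…,z_t` of `ℱ`,
and every vertex `z_{t+1}` minimizing `⟨·, p⟩` over `ℱ`, any optimal solution `γ*` of the
quadratic problem over the simplex yields a point `v = Σ γ*ᵢ zᵢ` satisfying
`⟨v,p⟩ + (c/2)‖v − x‖² ≤ ⟨u,p⟩ + (λc/2)‖u − x‖²` for all `u ∈ ℱ`. -/
theorem polytope_wpo (d : ℕ) (F : Set (EuclideanSpace ℝ (Fin d)))
    (hpoly : ∃ s : Finset (EuclideanSpace ℝ (Fin d)), F = convexHull ℝ (s : Set (EuclideanSpace ℝ (Fin d))))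
    (hFcpt : IsCompact F) (hFconv : Convex ℝ F) :
    ∃ lam : ℝ, 1 ≤ lam ∧
      ∀ (p : EuclideanSpace ℝ (Fin d)) (c : ℝ), 0 < c →
      ∀ (t : ℕ) (z : Fin (t + 1) → EuclideanSpace ℝ (Fin d)) (x : EuclideanSpace ℝ (Fin d)),
        -- `z₁,…,z_t` are vertices of `ℱ` and `x` is a convex combination of them
        (∀ i : Fin t, z i.castSucc ∈ Set.extremePoints ℝ F) →
        (∃ μ : Fin t → ℝ, (∀ i, 0 ≤ μ i) ∧ ∑ i, μ i = 1 ∧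
          x = ∑ i : Fin t, μ i • z i.castSucc) →
        -- `z_{t+1}` is a vertex of `ℱ` minimizing `⟨·, p⟩` over `ℱ`
        z (Fin.last t) ∈ Set.extremePoints ℝ F →
        (∀ u ∈ F, ⟪z (Fin.last t), p⟫ ≤ ⟪u, p⟫) →
        -- `γ*` is optimal for the quadratic problem over the simplex
        ∀ γs : Fin (t + 1) → ℝ, (∀ i, 0 ≤ γs i) → ∑ i, γs i = 1 →
          (∀ γ : Fin (t + 1) → ℝ, (∀ i, 0 ≤ γ i) → ∑ i, γ i = 1 →
            ⟪∑ i, γs i • z i, p⟫ + c / 2 * ‖(∑ i, γs i • z i) - x‖ ^ 2 ≤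
              ⟪∑ i, γ i • z i, p⟫ + c / 2 * ‖(∑ i, γ i • z i) - x‖ ^ 2) →
          ∀ u ∈ F,
            ⟪∑ i, γs i • z i, p⟫ + c / 2 * ‖(∑ i, γs i • z i) - x‖ ^ 2 ≤
              ⟪u, p⟫ + lam * c / 2 * ‖u - x‖ ^ 2 :=
  polytope_wpo_general d F hpoly
end
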